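/- If (C, c) is an lfg coalgebra, then the coalgebra (HC, Hc) is also lfg. -/

import Mathlib

open CategoryTheory CategoryTheory.Limits

universe v u

namespace LFF

variable {C : Type u} [Category.{v} C]

/-- An object is finitely presentable if its hom-functor preserves filtered colimits. -/
def IsFP (X : C) : Prop :=
  ∀ (J : Type v) [SmallCategory J] [IsFiltered J] (F : J ⥤ C)
    (c : Cocone F), Nonempty (IsColimit c) →
    Nonempty (IsColimit ((coyoneda.obj (Opposite.op X)).mapCocone c))

/-- An object is finitely generated if its hom-functor preserves filtered colimits
of diagrams all of whose connecting morphisms are monomorphisms. -/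
def IsFG (X : C) : Prop :=
  ∀ (J : Type v) [SmallCategory J] [IsFiltered J] (F : J ⥤ C),
    (∀ ⦃i j : J⦄ (f : i ⟶ j), Mono (F.map f)) →
    ∀ (c : Cocone F), Nonempty (IsColimit c) →
    Nonempty (IsColimit ((coyoneda.obj (Opposite.op X)).mapCocone c))

/-- A category is locally finitely presentable if it is cocomplete, the finitely
presentable objects are essentially small, and every object is a filtered colimit
of finitely presentable objects. -/
def IsLFP (C : Type u) [Category.{v} C] : Prop :=
  HasColimits C ∧
  EssentiallySmall.{v} (ObjectProperty.FullSubcategory (fun X : C => IsFP X)) ∧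
  ∀ X : C, ∃ (J : Type v) (_ : SmallCategory J) (_ : IsFiltered J)
    (F : J ⥤ C) (c : Cocone F),
      (∀ j, IsFP (F.obj j)) ∧ Nonempty (IsColimit c) ∧ Nonempty (c.pt ≅ X)

/-- A functor is finitary if it preserves filtered colimits. -/
def IsFinitary (H : C ⥤ C) : Prop :=
  ∀ (J : Type v) [SmallCategory J] [IsFiltered J], Nonempty (PreservesColimitsOfShape J H)

/-- An object is a strict initial object if it is initial and every morphism into it
is an isomorphism. -/
def IsStrictInitial (X : C) : Prop :=
  Nonempty (IsInitial X) ∧ ∀ (Y : C) (f : Y ⟶ X), IsIso f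

/-- A monomorphism is non-empty if its domain is not a strict initial object;
a functor preserves non-empty monos if it maps them to monos. -/
def PreservesNonemptyMonos (H : C ⥤ C) : Prop :=
  ∀ ⦃X Y : C⦄ (m : X ⟶ Y), Mono m → ¬ IsStrictInitial X → Mono (H.map m)

/-- A coalgebra is locally finitely generated (lfg) if every morphism from a finitely
generated object into its carrier factors through a coalgebra homomorphism from a
coalgebra with finitely generated carrier. -/
def IsLFGCoalgebra (H : C ⥤ C) (X : Endofunctor.Coalgebra H) : Prop :=
  ∀ (S : C), IsFG S → ∀ f : S ⟶ X.V,
    ∃ (P : Endofunctor.Coalgebra H) (h : P ⟶ X) (f' : S ⟶ P.V),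
      IsFG P.V ∧ f' ≫ h.f = f

/-- An algebra is fg-iterative if every flat equation morphism `e : X ⟶ HX + A` with
`X` finitely generated has a unique solution. -/
def IsFGIterative [HasBinaryCoproducts C] (H : C ⥤ C) (A : Endofunctor.Algebra H) : Prop :=
  ∀ (X : C), IsFG X → ∀ e : X ⟶ (H.obj X ⨿ A.a),
    ∃! s : X ⟶ A.a,
      s = e ≫ coprod.map (H.map s) (𝟙 A.a) ≫ coprod.desc A.str (𝟙 A.a)

end LFF

/-!
Write `Y` as a filtered colimit of finitely presentable objects `Fⱼ`. An lfp category has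
(strong epi, mono)-factorisations, so the images `Iⱼ ↪ Y` of the colimit injections form a
filtered diagram of monomorphisms with colimit `Y`, and each `Iⱼ` is finitely generated as a
strong quotient of `Fⱼ`. Unless `Y` is initial, some `Iⱼ` is not strict initial, and then `H`
maps the diagram above it to a filtered diagram of monomorphisms with colimit `HY`; hence every
`f : S ⟶ HY` with `S` finitely generated factors as `S ⟶ HIⱼ ⟶ HY`.

For `Y = C`, since `(C, c)` is lfg, `Iⱼ ⟶ C` factors through a homomorphism
`h : (P, p) ⟶ (C, c)` with `P` finitely generated, which turns the factorisation into
`f = Hh ∘ w` with `w : S ⟶ HP`. Then `S + P` with structure map `[H inr ∘ w, H inr ∘ p]` is a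
coalgebra with finitely generated carrier, and `[f, c ∘ h] : S + P ⟶ HC` is a homomorphism into
`(HC, Hc)` extending `f`.
-/

open CategoryTheory CategoryTheory.Limits

universe w w'

namespace LFF

variable {C : Type u} [Category.{v} C]

lemma IsFP.isFG {R : C} (hR : IsFP R) : IsFG R :=
  fun J _ _ F _ c hc => hR J F c hc

lemma IsFP.exists_hom_of_isColimit {R : C} (hR : IsFP R) {J : Type*} [Category J]
    [EssentiallySmall.{v} J] [IsFiltered J] {F : J ⥤ C} {c : Cocone F} (hc : IsColimit c)
    (q : R ⟶ c.pt) : ∃ (j : J) (t : R ⟶ F.obj j), t ≫ c.ι.app j = q := by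
  let e := equivSmallModel.{v} J
  have : IsFiltered (SmallModel.{v} J) := .of_equivalence e
  obtain ⟨hRc⟩ := hR _ (e.inverse ⋙ F) _ ⟨hc.whiskerEquivalence e.symm⟩
  obtain ⟨j, t, ht⟩ := Types.jointly_surjective _ hRc q
  exact ⟨e.inverse.obj j, t, ht⟩

lemma IsFP.exists_eq_of_isColimit {R : C} (hR : IsFP R) {J : Type v} [SmallCategory J]
    [IsFiltered J] {F : J ⥤ C} {c : Cocone F} (hc : IsColimit c) {j k : J}
    (x : R ⟶ F.obj j) (y : R ⟶ F.obj k) (h : x ≫ c.ι.app j = y ≫ c.ι.app k) :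
    ∃ (l : J) (u : j ⟶ l) (w : k ⟶ l), x ≫ F.map u = y ≫ F.map w := by
  obtain ⟨hRc⟩ := hR J F c ⟨hc⟩
  exact (Types.FilteredColimit.isColimit_eq_iff _ hRc).mp h

lemma IsFG.exists_hom_of_isColimit {S : C} (hS : IsFG S) {J : Type v} [SmallCategory J]
    [IsFiltered J] {F : J ⥤ C} (hF : ∀ ⦃i j : J⦄ (u : i ⟶ j), Mono (F.map u))
    {c : Cocone F} (hc : IsColimit c) (q : S ⟶ c.pt) :
    ∃ (j : J) (t : S ⟶ F.obj j), t ≫ c.ι.app j = q := by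
  obtain ⟨hSc⟩ := hS J F hF c ⟨hc⟩
  exact Types.jointly_surjective _ hSc q

namespace IsLFP

variable (hC : IsLFP C)
include hC

lemma exists_isColimit (Y : C) :
    ∃ (J : Type v) (_ : SmallCategory J) (_ : IsFiltered J) (F : J ⥤ C) (c : Cocone F)
      (_ : IsColimit c), (∀ j, IsFP (F.obj j)) ∧ c.pt = Y := by
  obtain ⟨J, _, _, F, c, hF, ⟨hc⟩, ⟨e⟩⟩ := hC.2.2 Y
  exact ⟨J, inferInstance, inferInstance, F, c.extend e.hom, hc.extendIso e.hom, hF, rfl⟩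

lemma exists_family_iso_of_isFP :
    ∃ (A : Type v) (ι : A → C), ∀ R, IsFP R → ∃ a, Nonempty (ι a ≅ R) := by
  let D := ObjectProperty.FullSubcategory (fun R : C => IsFP R)
  have := hC.2.1
  let e := equivSmallModel.{v} D
  exact ⟨SmallModel.{v} D, fun a => (e.inverse.obj a).obj,
    fun R hR => ⟨e.functor.obj ⟨R, hR⟩,
      ⟨(ObjectProperty.ι _).mapIso (e.unitIso.app ⟨R, hR⟩).symm⟩⟩⟩

lemma hom_ext {Y Z : C} {a b : Y ⟶ Z} (h : ∀ R, IsFP R → ∀ r : R ⟶ Y, r ≫ a = r ≫ b) :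
    a = b := by
  obtain ⟨J, _, _, F, c, hc, hF, rfl⟩ := hC.exists_isColimit Y
  exact hc.hom_ext fun j => h _ (hF j) _

lemma mono_ι_of_isColimit {J : Type v} [SmallCategory J] [IsFiltered J] {F : J ⥤ C}
    (hF : ∀ ⦃i j : J⦄ (u : i ⟶ j), Mono (F.map u)) {c : Cocone F} (hc : IsColimit c) (j : J) :
    Mono (c.ι.app j) := by
  refine ⟨fun {Y} a b hab => hC.hom_ext fun R hR r => ?_⟩
  obtain ⟨l, u, w, huw⟩ := hR.exists_eq_of_isColimit hc (r ≫ a) (r ≫ b) (by simp [hab])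
  have := huw =≫ F.map (IsFiltered.coeqHom u w)
  simp only [Category.assoc, ← F.map_comp, ← IsFiltered.coeq_condition] at this
  exact (cancel_mono (F.map (u ≫ IsFiltered.coeqHom u w))).1 (by simpa only [Category.assoc])

lemma isFG_of_exists_hom {S : C}
    (h : ∀ (J : Type v) [SmallCategory J] [IsFiltered J] (F : J ⥤ C),
      (∀ ⦃i j : J⦄ (u : i ⟶ j), Mono (F.map u)) →
      ∀ (c : Cocone F), IsColimit c → ∀ q : S ⟶ c.pt,
        ∃ (j : J) (t : S ⟶ F.obj j), t ≫ c.ι.app j = q) :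
    IsFG S := by
  intro J _ _ F hF c ⟨hc⟩
  refine ⟨Types.FilteredColimit.isColimitOf _ _ (fun q => ?_) fun i j x y hxy => ?_⟩
  · obtain ⟨j, t, ht⟩ := h J F hF c hc q
    exact ⟨j, t, ht.symm⟩
  · have := hC.mono_ι_of_isColimit hF hc (IsFiltered.max i j)
    refine ⟨_, IsFiltered.leftToMax i j, IsFiltered.rightToMax i j, ?_⟩
    simpa [← cancel_mono (c.ι.app (IsFiltered.max i j))] using hxy

lemma isFG_coprod [HasBinaryCoproducts C] {A B : C} (hA : IsFG A) (hB : IsFG B) :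
    IsFG (A ⨿ B) := by
  refine hC.isFG_of_exists_hom fun J _ _ F hF c hc q => ?_
  obtain ⟨i, a, ha⟩ := hA.exists_hom_of_isColimit hF hc (coprod.inl ≫ q)
  obtain ⟨j, b, hb⟩ := hB.exists_hom_of_isColimit hF hc (coprod.inr ≫ q)
  refine ⟨IsFiltered.max i j, coprod.desc (a ≫ F.map (IsFiltered.leftToMax i j))
    (b ≫ F.map (IsFiltered.rightToMax i j)), ?_⟩
  ext <;> simp only [coprod.inl_desc_assoc, coprod.inr_desc_assoc, Category.assoc, Cocone.w,
    ha, hb]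

lemma isFG_of_strongEpi {S I : C} (hS : IsFG S) (e : S ⟶ I) [StrongEpi e] : IsFG I := by
  refine hC.isFG_of_exists_hom fun J _ _ F hF c hc q => ?_
  obtain ⟨j, t, ht⟩ := hS.exists_hom_of_isColimit hF hc (e ≫ q)
  have := hC.mono_ι_of_isColimit hF hc j
  let sq : CommSq t e (c.ι.app j) q := ⟨ht⟩
  exact ⟨j, sq.lift, sq.fac_right⟩

lemma isFG_of_isInitial {I : C} (hI : IsInitial I) : IsFG I :=
  hC.isFG_of_exists_hom fun J _ _ _ _ _ _ _ =>
    ⟨(IsFiltered.nonempty (C := J)).some, hI.to _, hI.hom_ext _ _⟩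

end IsLFP

lemma strongEpi_colimit_ι_zero {F : ℕ ⥤ C} [HasColimit F]
    (hF : ∀ n, StrongEpi (F.map (homOfLE (Nat.le_add_right n 1)))) :
    StrongEpi (colimit.ι F 0) where
  epi := ⟨fun {W} a b h => colimit.hom_ext fun n => by
    induction n with
    | zero => exact h
    | succ n ih =>
      rw [← cancel_epi (F.map (homOfLE (Nat.le_add_right n 1))), colimit.w_assoc,
        colimit.w_assoc, ih]⟩
  llp _ _ _ _ := HasLiftingProperty.transfiniteComposition.hasLiftingProperty_ι_app_bot
    (colimit.isColimit F) fun n _ => (hF n).llp _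

section Image

variable [HasColimits C] {A : Type v} (ι : A → C)

def IdentifiedPairs {E Z : C} (g : E ⟶ Z) : Type v :=
  Σ a, { p : (ι a ⟶ E) × (ι a ⟶ E) // p.1 ≫ g = p.2 ≫ g }

noncomputable abbrev pairQuotient {E Z : C} (g : E ⟶ Z) : C :=
  coequalizer (Sigma.desc fun i : IdentifiedPairs ι g => i.2.1.1)
    (Sigma.desc fun i : IdentifiedPairs ι g => i.2.1.2)

namespace pairQuotient

variable {E Z : C} (g : E ⟶ Z)

noncomputable def π : E ⟶ pairQuotient ι g := coequalizer.π _ _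

instance strongEpi_π : StrongEpi (π ι g) := strongEpi_of_effectiveEpi (coequalizer.π _ _)

noncomputable def lift : pairQuotient ι g ⟶ Z :=
  coequalizer.desc g (Sigma.hom_ext _ _ fun i => by simpa using i.2.2)

@[simp]
lemma π_lift : π ι g ≫ lift ι g = g := coequalizer.π_desc _ _

lemma condition {a : A} (x y : ι a ⟶ E) (h : x ≫ g = y ≫ g) : x ≫ π ι g = y ≫ π ι g := by
  simpa [π] using Sigma.ι (fun i : IdentifiedPairs ι g => ι i.1) ⟨a, (x, y), h⟩ ≫=
    coequalizer.condition (Sigma.desc fun i : IdentifiedPairs ι g => i.2.1.1)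
      (Sigma.desc fun i : IdentifiedPairs ι g => i.2.1.2)

end pairQuotient

variable {T Z : C} (g : T ⟶ Z)

/- Only colimits are available, so the image of `g` is built from below: each step coequalises
all pairs of maps out of some `ι a` that are identified over `Z`. In the colimit of this ω-chain
the map to `Z` is mono, because a pair out of a finitely presentable object that is identified
over `Z` already lives at a finite stage, where the next step identifies it. -/
noncomputable def quotientChain : ℕ → Σ E : C, E ⟶ Z
  | 0 => ⟨T, g⟩
  | n + 1 => ⟨_, pairQuotient.lift ι (quotientChain n).2⟩

noncomputable def quotientSequence : ℕ ⥤ C :=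
  Functor.ofSequence fun n => pairQuotient.π ι (quotientChain ι g n).2

@[simp]
lemma quotientSequence_map_succ (n : ℕ) :
    (quotientSequence ι g).map (homOfLE (Nat.le_add_right n 1)) =
      pairQuotient.π ι (quotientChain ι g n).2 :=
  Functor.ofSequence_map_homOfLE_succ _ n

@[simps]
noncomputable def quotientSequenceCocone : Cocone (quotientSequence ι g) where
  pt := Z
  ι := NatTrans.ofSequence (fun n => (quotientChain ι g n).2) fun n => by
    rw [quotientSequence_map_succ]
    exact (pairQuotient.π_lift ι _).trans (Category.comp_id _).symm

lemma quotientSequence_π_ι (n : ℕ) :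
    pairQuotient.π ι (quotientChain ι g n).2 ≫ colimit.ι (quotientSequence ι g) (n + 1) =
      colimit.ι (quotientSequence ι g) n := by
  have := colimit.w (quotientSequence ι g) (homOfLE (Nat.le_add_right n 1))
  rw [quotientSequence_map_succ] at this
  exact this

lemma ι_quotientSequence_desc (n : ℕ) :
    colimit.ι (quotientSequence ι g) n ≫ colimit.desc _ (quotientSequenceCocone ι g) =
      (quotientChain ι g n).2 :=
  colimit.ι_desc _ _

lemma quotientSequence_condition {n : ℕ} {a : A} (x y : ι a ⟶ (quotientSequence ι g).obj n)
    (h : x ≫ colimit.ι _ n ≫ colimit.desc _ (quotientSequenceCocone ι g) =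
      y ≫ colimit.ι _ n ≫ colimit.desc _ (quotientSequenceCocone ι g)) :
    x ≫ colimit.ι (quotientSequence ι g) n = y ≫ colimit.ι (quotientSequence ι g) n := by
  rw [ι_quotientSequence_desc] at h
  have := pairQuotient.condition ι _ x y h =≫ colimit.ι (quotientSequence ι g) (n + 1)
  erw [Category.assoc, Category.assoc, quotientSequence_π_ι] at this
  exact this

lemma mono_desc_quotientSequenceCocone (hC : IsLFP C)
    (hι : ∀ R, IsFP R → ∃ a, Nonempty (ι a ≅ R)) :
    Mono (colimit.desc _ (quotientSequenceCocone ι g)) := by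
  refine ⟨fun {W} α β h => hC.hom_ext fun R hR r => ?_⟩
  obtain ⟨a, ⟨e⟩⟩ := hι R hR
  have hc := colimit.isColimit (quotientSequence ι g)
  obtain ⟨i, x, hx⟩ := hR.exists_hom_of_isColimit hc (r ≫ α)
  obtain ⟨j, y, hy⟩ := hR.exists_hom_of_isColimit hc (r ≫ β)
  obtain ⟨n, x', y', hx', hy'⟩ : ∃ (n : ℕ) (x' y' : R ⟶ (quotientSequence ι g).obj n),
      x' ≫ colimit.ι _ n = r ≫ α ∧ y' ≫ colimit.ι _ n = r ≫ β :=
    ⟨max i j, x ≫ (quotientSequence ι g).map (homOfLE (le_max_left i j)),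
      y ≫ (quotientSequence ι g).map (homOfLE (le_max_right i j)),
      by simpa using hx, by simpa using hy⟩
  rw [← cancel_epi e.hom, ← hx', ← hy']
  simpa using quotientSequence_condition ι g (e.hom ≫ x') (e.hom ≫ y')
    (by simp only [Category.assoc, reassoc_of% hx', reassoc_of% hy', h])

noncomputable def quotientFactorisation (hC : IsLFP C)
    (hι : ∀ R, IsFP R → ∃ a, Nonempty (ι a ≅ R)) : StrongEpiMonoFactorisation g where
  I := colimit (quotientSequence ι g)
  m := colimit.desc _ (quotientSequenceCocone ι g)
  m_mono := mono_desc_quotientSequenceCocone ι g hC hι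
  e := colimit.ι (quotientSequence ι g) 0
  fac := colimit.ι_desc (quotientSequenceCocone ι g) 0
  e_strong_epi := by
    refine strongEpi_colimit_ι_zero fun n => ?_
    rw [quotientSequence_map_succ]
    exact pairQuotient.strongEpi_π ι _

end Image

lemma IsLFP.hasStrongEpiMonoFactorisations (hC : IsLFP C) :
    HasStrongEpiMonoFactorisations C := by
  have := hC.1
  obtain ⟨A, ι, hι⟩ := hC.exists_family_iso_of_isFP
  exact ⟨fun g => ⟨quotientFactorisation ι g hC hι⟩⟩

section ImageDiagram

/- The legs are given as a family with codomain `Y` rather than as a cocone: cocone legs have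
codomain `((Functor.const J).obj Y).obj j`, on which the instances and simp lemmas about `image`
do not fire. -/
variable [HasStrongEpiMonoFactorisations C] {J : Type w} [Category.{w'} J] {F : J ⥤ C} {Y : C}
  (l : ∀ j, F.obj j ⟶ Y) (hl : ∀ ⦃i j : J⦄ (u : i ⟶ j), F.map u ≫ l j = l i)

noncomputable def imageMap {i j : J} (u : i ⟶ j) : image (l i) ⟶ image (l j) :=
  image.lift
    { I := image (l j)
      m := image.ι (l j)
      e := F.map u ≫ factorThruImage (l j)
      fac := by simp [hl u] }

@[simp]
lemma imageMap_ι {i j : J} (u : i ⟶ j) : imageMap l hl u ≫ image.ι (l j) = image.ι (l i) :=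
  image.lift_fac _

@[simp]
lemma factorThruImage_imageMap {i j : J} (u : i ⟶ j) :
    factorThruImage (l i) ≫ imageMap l hl u = F.map u ≫ factorThruImage (l j) :=
  image.fac_lift _

instance {i j : J} (u : i ⟶ j) : Mono (imageMap l hl u) :=
  mono_of_mono_fac (imageMap_ι l hl u)

noncomputable abbrev imageDiagram : J ⥤ C where
  obj j := image (l j)
  map u := imageMap l hl u
  map_id j := by rw [← cancel_mono (image.ι (l j))]; simp
  map_comp u u' := by rw [← cancel_mono (image.ι (l _))]; simp

@[simps]
noncomputable def imageCocone : Cocone (imageDiagram l hl) where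
  pt := Y
  ι := { app j := image.ι (l j)
         naturality _ _ u := (imageMap_ι l hl u).trans (Category.comp_id _).symm }

noncomputable def isColimitImageCocone
    (hc : IsColimit (Cocone.mk Y ⟨l, fun _ _ u => (hl u).trans (Category.comp_id _).symm⟩)) :
    IsColimit (imageCocone l hl) where
  desc s := hc.desc
    { pt := s.pt
      ι := { app j := factorThruImage (l j) ≫ s.ι.app j
             naturality _ _ u := by
               have := factorThruImage_imageMap l hl u =≫ s.ι.app _
               simp only [Category.assoc, s.w] at this
               simpa using this.symm } }
  fac s j := by
    rw [← cancel_epi (factorThruImage (l j))]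
    exact (image.fac_assoc _ _).trans (hc.fac _ j)
  uniq s m hm := hc.hom_ext fun j => calc
    l j ≫ m = factorThruImage (l j) ≫ s.ι.app j := by
      rw [← hm j]; exact (image.fac_assoc _ _).symm
    _ = _ := by rw [hc.fac]

end ImageDiagram

lemma IsStrictInitial.of_hom {A B : C} (hB : IsStrictInitial B) (f : A ⟶ B) :
    IsStrictInitial A := by
  have := hB.2 A f
  refine ⟨⟨hB.1.some.ofIso (asIso f).symm⟩, fun Y g => ?_⟩
  have := hB.2 Y (g ≫ f)
  exact IsIso.of_isIso_comp_right g f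

noncomputable def isInitialOfIsColimit {J : Type w} [Category.{w'} J] {D : J ⥤ C}
    {c : Cocone D} (hc : IsColimit c) (hD : ∀ j, IsInitial (D.obj j)) : IsInitial c.pt :=
  IsInitial.ofUniqueHom
    (fun W => hc.desc ⟨W, { app j := (hD j).to W, naturality _ _ _ := (hD _).hom_ext _ _ }⟩)
    fun _ _ => hc.hom_ext fun j => (hD j).hom_ext _ _

/-- Every object of `Under j₀` receives a map from `D.obj j₀`, so none is strict initial and `H`
preserves the transition monomorphisms there; `Under j₀` is final, so the colimit is unchanged. -/
lemma IsFG.exists_hom_map_of_isColimit {H : C ⥤ C} (hfin : IsFinitary H)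
    (hm : PreservesNonemptyMonos H) {J : Type v} [SmallCategory J] [IsFiltered J] {D : J ⥤ C}
    (hD : ∀ ⦃i j : J⦄ (u : i ⟶ j), Mono (D.map u)) {c : Cocone D} (hc : IsColimit c) (j₀ : J)
    (hj₀ : ¬ IsStrictInitial (D.obj j₀)) {S : C} (hS : IsFG S) (f : S ⟶ H.obj c.pt) :
    ∃ (j : J) (w : S ⟶ H.obj (D.obj j)), w ≫ H.map (c.ι.app j) = f := by
  have hc' : IsColimit (c.whisker (Under.forget j₀)) :=
    (Functor.Final.isColimitWhiskerEquiv _ _).symm hc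
  obtain ⟨_⟩ := hfin (Under j₀)
  have hmono : ∀ ⦃k k' : Under j₀⦄ (u : k ⟶ k'), Mono ((Under.forget j₀ ⋙ D ⋙ H).map u) :=
    fun k _ u => hm _ (hD u.right) fun h => hj₀ (h.of_hom (D.map k.hom))
  obtain ⟨k, w, hw⟩ := hS.exists_hom_of_isColimit hmono (isColimitOfPreserves H hc') f
  exact ⟨k.right, w, hw⟩

theorem exists_isFG_comp_map_eq (hC : IsLFP C) {H : C ⥤ C} (hfin : IsFinitary H)
    (hm : PreservesNonemptyMonos H) {Y S : C} (hS : IsFG S) (f : S ⟶ H.obj Y) :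
    ∃ (T : C) (γ : T ⟶ Y) (w : S ⟶ H.obj T), IsFG T ∧ w ≫ H.map γ = f := by
  have := hC.hasStrongEpiMonoFactorisations
  obtain ⟨J, _, _, F, c, hc, hF, rfl⟩ := hC.exists_isColimit Y
  let l : ∀ j, F.obj j ⟶ c.pt := c.ι.app
  have hl : ∀ ⦃i j : J⦄ (u : i ⟶ j), F.map u ≫ l j = l i := fun _ _ u => c.w u
  have hcolim := isColimitImageCocone l hl hc
  by_cases h : ∃ j, ¬ IsStrictInitial (image (l j))
  · obtain ⟨j₀, hj₀⟩ := h
    obtain ⟨j, w, hw⟩ := hS.exists_hom_map_of_isColimit hfin hm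
      (fun _ _ u => inferInstanceAs (Mono (imageMap l hl u))) hcolim j₀ hj₀ f
    exact ⟨image (l j), image.ι (l j), w,
      hC.isFG_of_strongEpi (hF j).isFG (factorThruImage (l j)), hw⟩
  · simp only [not_exists, not_not] at h
    exact ⟨c.pt, 𝟙 _, f,
      hC.isFG_of_isInitial (isInitialOfIsColimit (D := imageDiagram l hl) hcolim
        fun j => (h j).1.some), by simp⟩

section Coalgebra

variable {H : C ⥤ C}

def strHom (X : Endofunctor.Coalgebra H) : X ⟶ ⟨H.obj X.V, H.map X.str⟩ where
  f := X.str
  h := rfl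

variable [HasBinaryCoproducts C] {S : C} (P : Endofunctor.Coalgebra H) (w : S ⟶ H.obj P.V)

noncomputable abbrev coprodCoalgebra : Endofunctor.Coalgebra H where
  V := S ⨿ P.V
  str := coprod.desc (w ≫ H.map coprod.inr) (P.str ≫ H.map coprod.inr)

@[simps]
noncomputable def coprodCoalgebra.desc {Y : Endofunctor.Coalgebra H} (k : P ⟶ Y) (s : S ⟶ Y.V)
    (hs : s ≫ Y.str = w ≫ H.map k.f) : coprodCoalgebra P w ⟶ Y where
  f := coprod.desc s k.f
  h := by
    ext
    · simp only [coprod.inl_desc_assoc, Category.assoc, ← H.map_comp, coprod.inr_desc, hs]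
    · simp only [coprod.inr_desc_assoc, Category.assoc, ← H.map_comp, coprod.inr_desc, k.h]

end Coalgebra

end LFF

open LFF in
/-- If `(C, c)` is an lfg coalgebra, then so is `(HC, Hc)`. -/
theorem stmt14 {C : Type u} [Category.{v} C] (hC : IsLFP C)
    (H : C ⥤ C) (hfin : IsFinitary H) (hm : PreservesNonemptyMonos H)
    (X : Endofunctor.Coalgebra H) (hX : IsLFGCoalgebra H X) :
    IsLFGCoalgebra H ⟨H.obj X.V, H.map X.str⟩ := by
  intro S hS f
  have := hC.1
  obtain ⟨T, γ, w, hT, rfl⟩ := exists_isFG_comp_map_eq hC hfin hm hS f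
  obtain ⟨P, h, g, hP, rfl⟩ := hX T hT γ
  refine ⟨coprodCoalgebra P (w ≫ H.map g),
    coprodCoalgebra.desc P _ (h ≫ strHom X) (w ≫ H.map (g ≫ h.f)) (by simp [strHom]),
    coprod.inl, hC.isFG_coprod hS hP, coprod.inl_desc _ _⟩
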